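/- arXiv:1605.01506 — 5 statements merged into one kernel-verified Lean document; each statement's English description precedes it below -/
import Mathlib

section
/- Suppose n ≥ 1 and d ≥ 0 are integers, F is a field, P is a multilinear polynomial in n variables over F of total degree at most d, and A ⊆ F^n is a set with |A| > 2·Σ_{0 ≤ i ≤ d/2} C(n,i). If P(a − b) = 0 for all a, b ∈ A with a ≠ b, then P(0) = 0. -/
open Finset MvPolynomial

theorem multilinear_vanishing_lemma (n d : ℕ) (hn : 1 ≤ n)
    (F : Type*) [Field F] (P : MvPolynomial (Fin n) F)
    (hmul : ∀ m ∈ P.support, ∀ i : Fin n, m i ≤ 1)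
    (hdeg : P.totalDegree ≤ d)
    (A : Finset (Fin n → F))
    (hA : 2 * ∑ i ∈ Finset.range (d / 2 + 1), n.choose i < A.card)
    (hvan : ∀ a ∈ A, ∀ b ∈ A, a ≠ b → MvPolynomial.eval (a - b) P = 0) :
    MvPolynomial.eval (0 : Fin n → F) P = 0 := by
  classical
  by_contra hc0
  set c := MvPolynomial.eval (0 : Fin n → F) P with hc
  set s := d / 2 with hs
  have h2s : d ≤ 2 * s + 1 := by omega
  set 𝒮 : Finset (Finset (Fin n)) :=
    Finset.univ.filter (fun S => S.card ≤ s) with h𝒮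
  -- cardinality of 𝒮
  have hcard𝒮 : 𝒮.card = ∑ i ∈ Finset.range (s + 1), n.choose i := by
    have hset : 𝒮 = (Finset.range (s + 1)).biUnion
        (fun i => Finset.powersetCard i (Finset.univ : Finset (Fin n))) := by
      ext S
      simp only [h𝒮, Finset.mem_filter, Finset.mem_univ, true_and, Finset.mem_biUnion,
        Finset.mem_range, Finset.mem_powersetCard, Nat.lt_succ_iff]
      constructor
      · intro h; exact ⟨S.card, h, Finset.subset_univ S, rfl⟩
      · rintro ⟨i, hi, -, rfl⟩; exact hi
    rw [hset, Finset.card_biUnion]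
    · refine Finset.sum_congr rfl fun i _ => ?_
      rw [Finset.card_powersetCard, Finset.card_univ, Fintype.card_fin]
    · intro i _ j _ hij
      refine Finset.disjoint_left.mpr fun S hS hS' => hij ?_
      rw [Finset.mem_powersetCard] at hS hS'
      rw [← hS.2, ← hS'.2]
  -- support facts
  have hone : ∀ m ∈ P.support, ∀ i ∈ m.support, m i = 1 := by
    intro m hm i hi
    exact le_antisymm (hmul m hm i)
      (Nat.one_le_iff_ne_zero.mpr (Finsupp.mem_support_iff.mp hi))
  have hsuppd : ∀ m ∈ P.support, m.support.card ≤ d := by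
    intro m hm
    calc m.support.card = ∑ i ∈ m.support, 1 := by simp
      _ ≤ ∑ i ∈ m.support, m i :=
        Finset.sum_le_sum fun i hi =>
          Nat.one_le_iff_ne_zero.mpr (Finsupp.mem_support_iff.mp hi)
      _ = m.sum fun _ e => e := rfl
      _ ≤ P.totalDegree := MvPolynomial.le_totalDegree hm
      _ ≤ d := hdeg
  have hUsmall : ∀ m ∈ P.support, ∀ U ⊆ m.support,
      s < (m.support \ U).card → U.card ≤ s := by
    intro m hm U hU h
    have h1 : (m.support \ U).card = m.support.card - U.card := Finset.card_sdiff_of_subset hU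
    have h2 : U.card ≤ m.support.card := Finset.card_le_card hU
    have h3 := hsuppd m hm
    omega
  -- evaluation formula
  have heval : ∀ x : Fin n → F,
      MvPolynomial.eval x P = ∑ m ∈ P.support, P.coeff m * ∏ i ∈ m.support, x i := by
    intro x
    rw [MvPolynomial.eval_eq]
    refine Finset.sum_congr rfl fun m hm => ?_
    congr 1
    refine Finset.prod_congr rfl fun i hi => ?_
    rw [hone m hm i hi, pow_one]
  -- the decomposition functions
  set q : Finset (Fin n) → (Fin n → F) → F := fun S b =>
    ∑ m ∈ P.support.filter (fun m => S ⊆ m.support),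
      P.coeff m * ∏ i ∈ m.support \ S, (-b i) with hq
  set rr : Finset (Fin n) → (Fin n → F) → F := fun S a =>
    ∑ m ∈ P.support.filter (fun m => S ⊆ m.support ∧ s < (m.support \ S).card),
      P.coeff m * ∏ i ∈ m.support \ S, a i with hrr
  set mon : Finset (Fin n) → (Fin n → F) → F := fun S b => ∏ i ∈ S, (-b i) with hmon
  have hdecomp : ∀ a b : Fin n → F,
      MvPolynomial.eval (a - b) P
        = ∑ S ∈ 𝒮, (∏ i ∈ S, a i) * q S b + ∑ S ∈ 𝒮, rr S a * mon S b := by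
    intro a b
    have h1 : MvPolynomial.eval (a - b) P
        = ∑ m ∈ P.support, ∑ T ∈ m.support.powerset,
            P.coeff m * ((∏ i ∈ T, a i) * ∏ i ∈ m.support \ T, (-b i)) := by
      rw [heval]
      refine Finset.sum_congr rfl fun m hm => ?_
      have : (∏ i ∈ m.support, (a - b) i) = ∏ i ∈ m.support, (a i + (-b i)) :=
        Finset.prod_congr rfl fun i _ => by simp [sub_eq_add_neg]
      rw [this, Finset.prod_add, Finset.mul_sum]
    rw [h1]
    have h2 : ∀ m ∈ P.support,
        (∑ T ∈ m.support.powerset,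
            P.coeff m * ((∏ i ∈ T, a i) * ∏ i ∈ m.support \ T, (-b i)))
          = (∑ T ∈ m.support.powerset.filter (fun T => T.card ≤ s),
              P.coeff m * ((∏ i ∈ T, a i) * ∏ i ∈ m.support \ T, (-b i)))
            + (∑ T ∈ m.support.powerset.filter (fun T => ¬ T.card ≤ s),
              P.coeff m * ((∏ i ∈ T, a i) * ∏ i ∈ m.support \ T, (-b i))) := by
      intro m _
      exact (Finset.sum_filter_add_sum_filter_not _ _ _).symm
    rw [Finset.sum_congr rfl h2, Finset.sum_add_distrib]
    congr 1
    · -- left part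
      rw [Finset.sum_comm' (t' := 𝒮)
        (s' := fun T => P.support.filter (fun m => T ⊆ m.support))
        (by
          intro m T
          simp only [Finset.mem_filter, Finset.mem_powerset, h𝒮, Finset.mem_univ, true_and]
          tauto)]
      refine Finset.sum_congr rfl fun S _ => ?_
      rw [hq, Finset.mul_sum]
      refine Finset.sum_congr rfl fun m _ => ?_
      ring
    · -- right part
      have h3 : ∀ m ∈ P.support,
          (∑ T ∈ m.support.powerset.filter (fun T => ¬ T.card ≤ s),
              P.coeff m * ((∏ i ∈ T, a i) * ∏ i ∈ m.support \ T, (-b i)))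
            = ∑ U ∈ m.support.powerset.filter (fun U => s < (m.support \ U).card),
              P.coeff m * ((∏ i ∈ m.support \ U, a i) * ∏ i ∈ U, (-b i)) := by
        intro m _
        refine Finset.sum_nbij' (fun T => m.support \ T) (fun U => m.support \ U)
          ?_ ?_ ?_ ?_ ?_
        · intro T hT
          simp only [Finset.mem_filter, Finset.mem_powerset, not_le] at hT ⊢
          exact ⟨Finset.sdiff_subset, by
            rw [Finset.sdiff_sdiff_eq_self hT.1]; exact hT.2⟩
        · intro U hU
          simp only [Finset.mem_filter, Finset.mem_powerset, not_le] at hU ⊢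
          exact ⟨Finset.sdiff_subset, hU.2⟩
        · intro T hT
          simp only [Finset.mem_filter, Finset.mem_powerset] at hT
          exact Finset.sdiff_sdiff_eq_self hT.1
        · intro U hU
          simp only [Finset.mem_filter, Finset.mem_powerset] at hU
          exact Finset.sdiff_sdiff_eq_self hU.1
        · intro T hT
          simp only [Finset.mem_filter, Finset.mem_powerset] at hT
          rw [Finset.sdiff_sdiff_eq_self hT.1]
      rw [Finset.sum_congr rfl h3]
      rw [Finset.sum_comm' (t' := 𝒮)
        (s' := fun U => P.support.filter
          (fun m => U ⊆ m.support ∧ s < (m.support \ U).card))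
        (by
          intro m U
          simp only [Finset.mem_filter, Finset.mem_powerset, h𝒮, Finset.mem_univ, true_and]
          constructor
          · rintro ⟨hm, hU, hcard⟩
            exact ⟨⟨hm, hU, hcard⟩, hUsmall m hm U hU hcard⟩
          · rintro ⟨⟨hm, hU, hcard⟩, -⟩
            exact ⟨hm, hU, hcard⟩)]
      refine Finset.sum_congr rfl fun S _ => ?_
      rw [hrr, hmon, Finset.sum_mul]
      refine Finset.sum_congr rfl fun m _ => ?_
      ring
  -- linear algebra on ↥A → F
  set G : Finset (↥A → F) :=
    𝒮.image (fun S => (fun b : ↥A => q S (b : Fin n → F)))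
      ∪ 𝒮.image (fun S => (fun b : ↥A => mon S (b : Fin n → F))) with hG
  have hGcard : G.card ≤ 2 * ∑ i ∈ Finset.range (s + 1), n.choose i := by
    calc G.card ≤ _ + _ := Finset.card_union_le _ _
      _ ≤ 𝒮.card + 𝒮.card :=
        Nat.add_le_add (Finset.card_image_le) (Finset.card_image_le)
      _ = 2 * 𝒮.card := by ring
      _ = _ := by rw [hcard𝒮]
  -- each row is in the span of G
  have hrowmem : ∀ a : ↥A,
      (fun b : ↥A => MvPolynomial.eval ((a : Fin n → F) - (b : Fin n → F)) P)
        ∈ Submodule.span F (G : Set (↥A → F)) := by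
    intro a
    have heq : (fun b : ↥A => MvPolynomial.eval ((a : Fin n → F) - (b : Fin n → F)) P)
        = (∑ S ∈ 𝒮, (∏ i ∈ S, (a : Fin n → F) i) • (fun b : ↥A => q S (b : Fin n → F)))
          + (∑ S ∈ 𝒮, rr S (a : Fin n → F) • (fun b : ↥A => mon S (b : Fin n → F))) := by
      funext b
      simp only [Pi.add_apply, Finset.sum_apply, Pi.smul_apply, smul_eq_mul]
      exact hdecomp _ _
    rw [heq]
    refine Submodule.add_mem _ (Submodule.sum_mem _ fun S hS => ?_)
      (Submodule.sum_mem _ fun S hS => ?_)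
    · exact Submodule.smul_mem _ _ (Submodule.subset_span
        (by simp only [hG, Finset.coe_union, Set.mem_union, Finset.coe_image,
          Set.mem_image, Finset.mem_coe]; exact Or.inl ⟨S, hS, rfl⟩))
    · exact Submodule.smul_mem _ _ (Submodule.subset_span
        (by simp only [hG, Finset.coe_union, Set.mem_union, Finset.coe_image,
          Set.mem_image, Finset.mem_coe]; exact Or.inr ⟨S, hS, rfl⟩))
  -- the rows are scaled standard basis vectors
  have hrow_eq : ∀ a : ↥A,
      (fun b : ↥A => MvPolynomial.eval ((a : Fin n → F) - (b : Fin n → F)) P)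
        = (Pi.single a c : ↥A → F) := by
    intro a
    funext b
    by_cases hb : b = a
    · subst hb
      simp [hc]
    · rw [Pi.single_eq_of_ne hb]
      exact hvan _ a.2 _ b.2 (fun h => hb (Subtype.ext h.symm))
  have hsingle : ∀ a : ↥A, (Pi.single a (1 : F) : ↥A → F)
      ∈ Submodule.span F (G : Set (↥A → F)) := by
    intro a
    have h1 : (Pi.single a c : ↥A → F) ∈ Submodule.span F (G : Set (↥A → F)) := by
      rw [← hrow_eq a]; exact hrowmem a
    have h2 : (Pi.single a (1 : F) : ↥A → F) = c⁻¹ • (Pi.single a c : ↥A → F) := by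
      rw [← Pi.single_smul, smul_eq_mul, inv_mul_cancel₀ hc0]
    rw [h2]
    exact Submodule.smul_mem _ _ h1
  -- hence the span is everything
  have htop : Submodule.span F (G : Set (↥A → F)) = ⊤ := by
    rw [eq_top_iff, ← (Pi.basisFun F ↥A).span_eq, Submodule.span_le]
    rintro x ⟨i, rfl⟩
    rw [Pi.basisFun_apply]
    exact hsingle i
  -- conclude with finrank
  have hfin : A.card ≤ G.card := by
    calc A.card = Fintype.card ↥A := (Fintype.card_coe A).symm
      _ = Module.finrank F (↥A → F) := (Module.finrank_fintype_fun_eq_card F).symm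
      _ = Module.finrank F (Submodule.span F (G : Set (↥A → F))) := by
          rw [htop, finrank_top]
      _ ≤ G.card := finrank_span_finset_le_card G
  omega
end

section
/- Let n ≥ 1, d ≥ 0, δ ≥ 0 be integers, F a field, and let f_δ(n,d) denote the number of monomials x₁^{i₁}⋯x_n^{i_n} with 0 ≤ i₁, …, i_n ≤ δ and i₁ + ⋯ + i_n ≤ d. Suppose P is a polynomial in n variables over F with every individual degree at most δ and total degree at most d, and A ⊆ F^n satisfies |A| > 2·f_δ(n, ⌊d/2⌋). If P(a − b) = 0 for all a, b ∈ A with a ≠ b, then P(0) = 0. -/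
/-- `f_δ(n,d)`: the number of monomials `x₁^{i₁} ⋯ x_n^{i_n}` with
`0 ≤ i₁, …, i_n ≤ δ` and `i₁ + ⋯ + i_n ≤ d`. -/
noncomputable def monomialCount (δ n d : ℕ) : ℕ :=
  Nat.card {v : Fin n → ℕ // (∀ j, v j ≤ δ) ∧ ∑ j, v j ≤ d}

/-!
If `P(0) ≠ 0`, the matrix `(P(a - b))_{a,b ∈ A}` is diagonal with nonzero diagonal, so its rank is
`|A|`. On the other hand, expanding `P(x - y)` in `2n` variables, each monomial `x^u y^v` comes from
a monomial of `P` of exponent `u + v`, so `u, v ≤ δ` coordinatewise and `|u| + |v| ≤ d`; hence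
`|u| ≤ ⌊d/2⌋` or `|v| ≤ ⌊d/2⌋`. Grouping the monomials accordingly writes the matrix as a sum of
at most `2 f_δ(n, ⌊d/2⌋)` rank-one matrices.
-/

open MvPolynomial Finset

theorem Matrix.rank_le_card_add_card_of_eq_sum_add_sum {ι κ α β R : Type*} [Fintype ι] [Fintype κ]
    [CommRing R] [StrongRankCondition R] (M : Matrix ι κ R) (U : Finset α) (V : Finset β)
    (f : α → ι → R) (g : α → κ → R) (h : β → ι → R) (e : β → κ → R)
    (hM : ∀ i j, M i j = ∑ u ∈ U, f u i * g u j + ∑ v ∈ V, h v i * e v j) :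
    M.rank ≤ #U + #V := by
  have hfactor : M = fromCols (of fun i (u : U) => f u i) (of fun i (v : V) => h v i) *
      fromRows (of fun (u : U) j => g u j) (of fun (v : V) j => e v j) := by
    ext i j
    rw [hM, fromCols_mul_fromRows, add_apply, mul_apply, mul_apply, ← sum_coe_sort U,
      ← sum_coe_sort V]
    rfl
  rw [hfactor]
  exact (rank_mul_le_left _ _).trans ((rank_le_card_width _).trans (by simp))

theorem MvPolynomial.eval_sumElim_eq_sum {σ τ R : Type*} [Fintype σ] [Fintype τ] [CommSemiring R]
    (Q : MvPolynomial (σ ⊕ τ) R) (a : σ → R) (b : τ → R) :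
    eval (Sum.elim a b) Q =
      ∑ s ∈ Q.support, Q.coeff s * ((∏ i, a i ^ s (.inl i)) * ∏ j, b j ^ s (.inr j)) := by
  simp only [eval_eq', Fintype.prod_sum_type, Sum.elim_inl, Sum.elim_inr]

theorem MvPolynomial.exists_eval_sumElim_eq_sum_add_sum {σ τ R : Type*} [Fintype σ] [Fintype τ]
    [CommSemiring R] (Q : MvPolynomial (σ ⊕ τ) R) (U : Finset (σ → ℕ)) (V : Finset (τ → ℕ))
    (hQ : ∀ s ∈ Q.support, (fun i => s (.inl i)) ∈ U ∨ (fun j => s (.inr j)) ∈ V) :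
    ∃ (G : (σ → ℕ) → (τ → R) → R) (H : (τ → ℕ) → (σ → R) → R), ∀ a b,
      eval (Sum.elim a b) Q =
        ∑ u ∈ U, (∏ i, a i ^ u i) * G u b + ∑ v ∈ V, H v a * ∏ j, b j ^ v j := by
  classical
  set left : (σ ⊕ τ →₀ ℕ) → σ → ℕ := fun s i => s (.inl i)
  set right : (σ ⊕ τ →₀ ℕ) → τ → ℕ := fun s j => s (.inr j)
  set S := {s ∈ Q.support | left s ∈ U}
  set T := {s ∈ Q.support | left s ∉ U}
  refine ⟨fun u b => ∑ s ∈ S with left s = u, Q.coeff s * ∏ j, b j ^ right s j,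
    fun v a => ∑ s ∈ T with right s = v, Q.coeff s * ∏ i, a i ^ left s i, fun a b => ?_⟩
  rw [eval_sumElim_eq_sum, ← sum_filter_add_sum_filter_not Q.support (left · ∈ U)]
  congr 1
  · rw [← sum_fiberwise_of_maps_to (g := left) (t := U) (fun s hs => (mem_filter.1 hs).2)]
    refine sum_congr rfl fun u _ => ?_
    rw [mul_sum]
    refine sum_congr rfl fun s hs => ?_
    obtain rfl := (mem_filter.1 hs).2
    ring
  · rw [← sum_fiberwise_of_maps_to (g := right) (t := V) fun s hs =>
      (hQ s (mem_filter.1 hs).1).resolve_left (mem_filter.1 hs).2]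
    refine sum_congr rfl fun v _ => ?_
    rw [sum_mul]
    refine sum_congr rfl fun s hs => ?_
    obtain rfl := (mem_filter.1 hs).2
    ring

theorem MvPolynomial.weight_mem_support_of_mem_support_aeval {σ τ R : Type*} [Fintype σ]
    [CommSemiring R] {w : τ → σ →₀ ℕ} {g : σ → MvPolynomial τ R}
    (hg : ∀ i, IsWeightedHomogeneous w (g i) (Finsupp.single i 1)) (P : MvPolynomial σ R)
    {s : τ →₀ ℕ} (hs : s ∈ (aeval g P).support) : Finsupp.weight w s ∈ P.support := by
  rw [mem_support_iff, aeval_def, eval₂_eq', coeff_sum] at hs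
  obtain ⟨m, hm, hcoeff⟩ := exists_ne_zero_of_sum_ne_zero hs
  have hhom : IsWeightedHomogeneous w (C (P.coeff m) * ∏ i, g i ^ m i) m := by
    convert ((IsWeightedHomogeneous.prod _ _ _ fun i _ => (hg i).pow (m i)).C_mul (P.coeff m))
    simp [Finsupp.univ_sum_single]
  rwa [hhom hcoeff]

noncomputable def MvPolynomial.diffSubst {σ R : Type*} [CommRing R] (P : MvPolynomial σ R) :
    MvPolynomial (σ ⊕ σ) R :=
  aeval (fun i => X (.inl i) - X (.inr i)) P

theorem MvPolynomial.eval_sumElim_diffSubst {σ R : Type*} [CommRing R] (P : MvPolynomial σ R)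
    (a b : σ → R) : eval (Sum.elim a b) P.diffSubst = eval (a - b) P := by
  rw [diffSubst, aeval_eq_bind₁, eval, eval₂Hom_bind₁]
  simp [Pi.sub_def]

theorem MvPolynomial.exists_mem_support_of_mem_support_diffSubst {σ R : Type*} [Fintype σ]
    [CommRing R] (P : MvPolynomial σ R) {s : σ ⊕ σ →₀ ℕ} (hs : s ∈ P.diffSubst.support) :
    ∃ m ∈ P.support, ∀ i, s (.inl i) + s (.inr i) = m i := by
  classical
  -- giving both `x_i` and `y_i` the weight `eᵢ` makes `x_i - y_i` homogeneous of degree `eᵢ`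
  set w : σ ⊕ σ → σ →₀ ℕ := fun j => Finsupp.single (Sum.elim id id j) 1
  have hw : ∀ i, IsWeightedHomogeneous w (X (.inl i) - X (.inr i) : MvPolynomial (σ ⊕ σ) R)
      (Finsupp.single i 1) := fun i => by
    apply IsWeightedHomogeneous.sub
    · exact isWeightedHomogeneous_X R w (.inl i)
    · exact isWeightedHomogeneous_X R w (.inr i)
  refine ⟨_, weight_mem_support_of_mem_support_aeval hw P hs, fun i => ?_⟩
  rw [Finsupp.weight_apply, Finsupp.sum_fintype _ _ (by simp), sum_apply', Fintype.sum_sum_type]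
  simp [w, Finsupp.single_apply]

def boundedExponents (σ : Type*) [Fintype σ] [DecidableEq σ] (δ k : ℕ) : Finset (σ → ℕ) :=
  {u ∈ Fintype.piFinset fun _ => range (δ + 1) | ∑ i, u i ≤ k}

theorem mem_boundedExponents {σ : Type*} [Fintype σ] [DecidableEq σ] {δ k : ℕ} {u : σ → ℕ} :
    u ∈ boundedExponents σ δ k ↔ (∀ i, u i ≤ δ) ∧ ∑ i, u i ≤ k := by
  simp [boundedExponents]

theorem card_boundedExponents (δ n k : ℕ) :
    #(boundedExponents (Fin n) δ k) = monomialCount δ n k := by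
  rw [monomialCount, ← Nat.card_eq_finsetCard]
  exact Nat.card_congr (Equiv.subtypeEquivRight fun _ => mem_boundedExponents)

theorem MvPolynomial.mem_boundedExponents_of_mem_support_diffSubst {σ R : Type*} [Fintype σ]
    [DecidableEq σ] [CommRing R] {P : MvPolynomial σ R} {δ d : ℕ}
    (hind : ∀ m ∈ P.support, ∀ i, m i ≤ δ) (hdeg : P.totalDegree ≤ d)
    {s : σ ⊕ σ →₀ ℕ} (hs : s ∈ P.diffSubst.support) :
    (fun i => s (.inl i)) ∈ boundedExponents σ δ (d / 2) ∨
      (fun i => s (.inr i)) ∈ boundedExponents σ δ (d / 2) := by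
  obtain ⟨m, hm, hsm⟩ := exists_mem_support_of_mem_support_diffSubst P hs
  have hsum : ∑ i, s (.inl i) + ∑ i, s (.inr i) ≤ d := by
    refine le_trans (le_of_eq ?_) ((le_totalDegree hm).trans hdeg)
    rw [Finsupp.sum_fintype _ _ fun _ => rfl, ← sum_add_distrib]
    exact sum_congr rfl fun i _ => hsm i
  have hl : ∀ i, s (.inl i) ≤ δ := fun i => (hsm i ▸ le_self_add).trans (hind m hm i)
  have hr : ∀ i, s (.inr i) ≤ δ := fun i => (hsm i ▸ le_add_self).trans (hind m hm i)
  rcases le_total (∑ i, s (.inl i)) (∑ i, s (.inr i)) with h | h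
  · exact .inl (mem_boundedExponents.2 ⟨hl, by omega⟩)
  · exact .inr (mem_boundedExponents.2 ⟨hr, by omega⟩)

theorem Matrix.of_eval_sub_eq_diagonal {σ R : Type*} [CommRing R] [DecidableEq (σ → R)]
    (P : MvPolynomial σ R) (A : Finset (σ → R))
    (hvan : ∀ a ∈ A, ∀ b ∈ A, a ≠ b → eval (a - b) P = 0) :
    Matrix.of (fun a b : A => eval (a - b : σ → R) P) = Matrix.diagonal fun _ => eval 0 P := by
  ext a b
  by_cases hab : a = b
  · simp [hab]
  · simp [Matrix.diagonal_apply_ne _ hab, hvan a a.2 b b.2 (Subtype.coe_ne_coe.2 hab)]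

theorem bounded_degree_vanishing_lemma_general (n d δ : ℕ)
    (F : Type*) [Field F] (P : MvPolynomial (Fin n) F)
    (hind : ∀ m ∈ P.support, ∀ i : Fin n, m i ≤ δ)
    (hdeg : P.totalDegree ≤ d)
    (A : Finset (Fin n → F))
    (hA : 2 * monomialCount δ n (d / 2) < A.card)
    (hvan : ∀ a ∈ A, ∀ b ∈ A, a ≠ b → MvPolynomial.eval (a - b) P = 0) :
    MvPolynomial.eval (0 : Fin n → F) P = 0 := by
  classical
  by_contra h0
  set D := boundedExponents (Fin n) δ (d / 2)
  obtain ⟨G, H, hGH⟩ := P.diffSubst.exists_eval_sumElim_eq_sum_add_sum D D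
    fun _ hs => mem_boundedExponents_of_mem_support_diffSubst hind hdeg hs
  have hrank := Matrix.rank_le_card_add_card_of_eq_sum_add_sum
    (Matrix.of fun a b : A => eval (a - b : Fin n → F) P) D D _ _ _ _
    fun a b => (eval_sumElim_diffSubst P a b).symm.trans (hGH a b)
  rw [Matrix.of_eval_sub_eq_diagonal P A hvan, Matrix.rank_diagonal, card_boundedExponents] at hrank
  simp only [ne_eq, h0, not_false_eq_true, Fintype.card_subtype_true, Fintype.card_coe] at hrank
  omega

theorem bounded_degree_vanishing_lemma (n d δ : ℕ) (hn : 1 ≤ n)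
    (F : Type*) [Field F] (P : MvPolynomial (Fin n) F)
    (hind : ∀ m ∈ P.support, ∀ i : Fin n, m i ≤ δ)
    (hdeg : P.totalDegree ≤ d)
    (A : Finset (Fin n → F))
    (hA : 2 * monomialCount δ n (d / 2) < A.card)
    (hvan : ∀ a ∈ A, ∀ b ∈ A, a ≠ b → MvPolynomial.eval (a - b) P = 0) :
    MvPolynomial.eval (0 : Fin n → F) P = 0 :=
  bounded_degree_vanishing_lemma_general n d δ F P hind hdeg A hA hvan
end

section
/- Suppose n ≥ 1 and A ⊆ (ℤ/4ℤ)^n is progression-free. Then for every real ε with 0 < ε < 1/4, the number of cosets of F_n in (ℤ/4ℤ)^n containing at least 2^(nH(1/2−ε)+1) elements of A is less than 2^(nH(2ε)). -/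
/-- A set `A` in an additively written abelian group is progression-free if there do not
exist pairwise distinct `a, b, c ∈ A` with `a + b = 2c`. -/
def ProgressionFree {G : Type*} [AddCommGroup G] (A : Set G) : Prop :=
  ¬ ∃ a ∈ A, ∃ b ∈ A, ∃ c ∈ A, a ≠ b ∧ a ≠ c ∧ b ≠ c ∧ a + b = c + c

/-- The binary entropy function `H(x) = -x log₂ x - (1-x) log₂ (1-x)`. -/
noncomputable def binEnt (x : ℝ) : ℝ :=
  -x * Real.logb 2 x - (1 - x) * Real.logb 2 (1 - x)

/-- `F_n = {g ∈ (ℤ/4ℤ)^n : 2g = 0}`, the subgroup of `(ℤ/4ℤ)^n` generated by its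
involutions. -/
def Fsub (n : ℕ) : AddSubgroup (Fin n → ZMod 4) where
  carrier := {g | g + g = 0}
  add_mem' := by
    intro a b ha hb
    simp only [Set.mem_setOf_eq] at *
    calc a + b + (a + b) = (a + a) + (b + b) := by abel
    _ = 0 := by rw [ha, hb, add_zero]
  zero_mem' := by simp
  neg_mem' := by
    intro a ha
    simp only [Set.mem_setOf_eq] at *
    rw [← neg_add, ha, neg_zero]

/-!
Reduction mod 2 identifies the cosets of `F_n` with `𝔽₂ⁿ`, and every `a ∈ (ℤ/4)ⁿ` is
`r(a) + 2 d(a)` digitwise. If there are many rich cosets `S`, a dimension count gives a nonzero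
multilinear polynomial `P` of degree `≤ D ≈ (1 - 2ε) n` vanishing off `S`; pick `x` with
`P x ≠ 0`. For distinct `b, b'` in the fibre of `A` over `x`, the coset `x + d(b) + d(b')`
contains no `a ∈ A`, since otherwise `b + b' = 2a`; hence the matrix `P (x + d(b) + d(b'))` is
diagonal with nonzero diagonal. By the Croot–Lev–Pach splitting its rank is at most
`2 #{T : |T| ≤ D/2}`, so the fibre over `x` is small. Both counts of small subsets are bounded
by binary entropy, and the fibre over `x` cannot be both rich and small.
-/

open Finset

namespace RichCosets

def setsOfCardLE (ι : Type*) [Fintype ι] (D : ℕ) : Finset (Finset ι) := {T | #T ≤ D}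

section Entropy

variable {ι : Type*} [Fintype ι]

lemma two_rpow_neg_mul_binEnt_le {α : ℝ} (hα : 0 < α) (hα' : α ≤ 1 / 2) {N t : ℕ}
    (ht : (t : ℝ) ≤ α * N) :
    (2 : ℝ) ^ (-(N * binEnt α)) ≤ α ^ t * (1 - α) ^ (N - t) := by
  have hα1 : 0 < 1 - α := by linarith
  have htN : t ≤ N := by
    have : (t : ℝ) ≤ N := by nlinarith [(Nat.cast_nonneg N : (0 : ℝ) ≤ N)]
    exact_mod_cast this
  have hlog : Real.log α ≤ Real.log (1 - α) := Real.log_le_log hα (by linarith)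
  rw [← Real.log_le_log_iff (by positivity) (by positivity), Real.log_rpow two_pos,
    Real.log_mul (by positivity) (by positivity), Real.log_pow, Real.log_pow, Nat.cast_sub htN]
  have hlog2 : 0 < Real.log 2 := Real.log_pos one_lt_two
  have hH : binEnt α * Real.log 2 = -(α * Real.log α + (1 - α) * Real.log (1 - α)) := by
    unfold binEnt Real.logb
    field_simp
    ring
  nlinarith [mul_le_mul_of_nonneg_left hlog (sub_nonneg.mpr ht)]

/-- The weights `α ^ #T * (1 - α) ^ (N - #T)` sum to `1` over all `T`, and each of them is at
least `2 ^ (-N H(α))` when `#T ≤ α N`. -/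
theorem card_setsOfCardLE_lt_two_rpow_binEnt [Nonempty ι] {α : ℝ} (hα : 0 < α)
    (hα' : α ≤ 1 / 2) {D : ℕ} (hD : (D : ℝ) ≤ α * Fintype.card ι) :
    (#(setsOfCardLE ι D) : ℝ) < 2 ^ (Fintype.card ι * binEnt α) := by
  set N := Fintype.card ι
  have hN : (0 : ℝ) < N := by exact_mod_cast Fintype.card_pos
  have hα1 : 0 < 1 - α := by linarith
  have hweights : ∑ T ∈ setsOfCardLE ι D, α ^ #T * (1 - α) ^ (N - #T) < 1 := by
    have huniv : (univ : Finset ι) ∉ setsOfCardLE ι D := by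
      simp only [setsOfCardLE, mem_filter, mem_univ, true_and, card_univ, not_le]
      exact_mod_cast hD.trans_lt (by nlinarith : α * N < N)
    calc ∑ T ∈ setsOfCardLE ι D, α ^ #T * (1 - α) ^ (N - #T)
        < ∑ T ∈ (univ : Finset ι).powerset, α ^ #T * (1 - α) ^ (#(univ : Finset ι) - #T) :=
          sum_lt_sum_of_subset (by simp) (mem_powerset_self _) huniv (by positivity)
            (fun _ _ _ => by positivity)
      _ = 1 := by rw [sum_pow_mul_eq_add_pow]; simp
  have hcard : #(setsOfCardLE ι D) * (2 : ℝ) ^ (-(N * binEnt α)) < 1 := by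
    refine lt_of_le_of_lt ?_ hweights
    rw [← nsmul_eq_mul]
    refine card_nsmul_le_sum _ _ _ fun T hT => two_rpow_neg_mul_binEnt_le hα hα' ?_
    simp only [setsOfCardLE, mem_filter, mem_univ, true_and] at hT
    exact (Nat.cast_le.mpr hT).trans hD
  rwa [Real.rpow_neg zero_le_two, ← div_eq_mul_inv, div_lt_one (by positivity)] at hcard

theorem card_lt_card_eq_card_setsOfCardLE {D m : ℕ} (h : D + m + 1 = Fintype.card ι) :
    #{T : Finset ι | D < #T} = #(setsOfCardLE ι m) := by
  classical
  refine card_nbij' compl compl (fun T hT => ?_) (fun T hT => ?_) (fun T _ => compl_compl T)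
    (fun T _ => compl_compl T) <;>
  simp only [setsOfCardLE, coe_filter, mem_univ, true_and, Set.mem_ofPred_eq,
    card_compl] at hT ⊢ <;>
  have := card_le_univ T <;> omega

theorem card_lt_card_lt_two_rpow_binEnt [Nonempty ι] {α : ℝ} (hα : 0 < α)
    (hα' : α ≤ 1 / 2) :
    (#{T : Finset ι | Fintype.card ι - ⌊α * Fintype.card ι⌋₊ - 1 < #T} : ℝ)
      < 2 ^ (Fintype.card ι * binEnt α) := by
  have hN : (0 : ℝ) < Fintype.card ι := by exact_mod_cast Fintype.card_pos
  have hfloor : ⌊α * Fintype.card ι⌋₊ < Fintype.card ι :=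
    (Nat.floor_lt (by positivity)).mpr (by nlinarith)
  rw [card_lt_card_eq_card_setsOfCardLE (m := ⌊α * Fintype.card ι⌋₊) (by omega)]
  exact card_setsOfCardLE_lt_two_rpow_binEnt hα hα' (Nat.floor_le (by positivity))

theorem two_mul_card_setsOfCardLE_half_lt [Nonempty ι] {ε : ℝ} (hε : 0 < ε)
    (hε' : ε < 1 / 4) :
    2 * (#(setsOfCardLE ι ((Fintype.card ι - ⌊2 * ε * Fintype.card ι⌋₊ - 1) / 2)) : ℝ)
      < 2 ^ (Fintype.card ι * binEnt (1 / 2 - ε) + 1) := by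
  set N := Fintype.card ι
  set m := ⌊2 * ε * N⌋₊
  have hm : 2 * ε * N < m + 1 := Nat.lt_floor_add_one _
  have hD : (((N - m - 1) / 2 : ℕ) : ℝ) ≤ (1 / 2 - ε) * N := by
    refine Nat.cast_div_le.trans ?_
    rcases Nat.lt_or_ge N (m + 1) with hNm | hNm
    · rw [Nat.sub_sub, Nat.sub_eq_zero_of_le hNm.le]
      nlinarith [(Nat.cast_nonneg N : (0 : ℝ) ≤ N)]
    · rw [Nat.sub_sub, Nat.cast_sub hNm]
      push_cast
      linarith
  rw [Real.rpow_add_one two_ne_zero, mul_comm]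
  gcongr
  exact card_setsOfCardLE_lt_two_rpow_binEnt (by linarith) (by linarith) hD

end Entropy

section Monomials

variable {ι K : Type*}

def squarefreeMonomial (K : Type*) [CommMonoid K] (T : Finset ι) (v : ι → K) : K :=
  ∏ i ∈ T, v i

lemma squarefreeMonomial_indicator [CommMonoidWithZero K] [DecidableEq ι] (T U : Finset ι) :
    squarefreeMonomial K T (fun i => if i ∈ U then (1 : K) else 0) =
      if T ⊆ U then 1 else 0 := by
  split_ifs with hTU
  · exact prod_eq_one fun i hi => by simp [hTU hi]
  · obtain ⟨i, hiT, hiU⟩ := not_subset.mp hTU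
    exact prod_eq_zero hiT (by simp [hiU])

lemma squarefreeMonomial_add [CommSemiring K] [DecidableEq ι] (T : Finset ι) (z y : ι → K) :
    squarefreeMonomial K T (z + y) =
      ∑ U ∈ T.powerset, squarefreeMonomial K U z * squarefreeMonomial K (T \ U) y :=
  prod_add _ _ _

/-- Evaluating at indicator vectors gives `∑_{T ⊆ U} c T`, which determines `c` by induction
on `#U`. -/
theorem linearIndependent_squarefreeMonomial (K : Type*) [CommRing K] :
    LinearIndependent K (squarefreeMonomial (ι := ι) K) := by
  classical
  rw [linearIndependent_iff']
  intro s c hc U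
  induction U using Finset.strongInduction with
  | H U ih =>
    intro hU
    have hU' := congrFun hc fun i => if i ∈ U then 1 else 0
    simp only [Finset.sum_apply, Pi.smul_apply, squarefreeMonomial_indicator, smul_eq_mul, mul_ite,
      mul_one, mul_zero, sum_ite, sum_const_zero, add_zero, Pi.zero_apply] at hU'
    rwa [sum_eq_single_of_mem U (by simp [hU]) fun T hT hTU =>
      ih T (ssubset_of_subset_of_ne (mem_filter.mp hT).2 hTU) (mem_filter.mp hT).1] at hU'

theorem exists_ne_zero_eq_zero_off [Fintype ι] [Field K] [Fintype K] (S : Finset (ι → K))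
    (D : ℕ) (hS : Fintype.card K ^ Fintype.card ι < #S + #(setsOfCardLE ι D)) :
    ∃ c : Finset ι → K, (∑ T ∈ setsOfCardLE ι D, c T • squarefreeMonomial K T) ≠ 0 ∧
      ∀ v ∉ S, (∑ T ∈ setsOfCardLE ι D, c T • squarefreeMonomial K T) v = 0 := by
  classical
  let restrict : Finset ι → {v // v ∉ S} → K := fun T v => squarefreeMonomial K T v
  have hdep : ¬ LinearIndepOn K restrict (setsOfCardLE ι D : Set (Finset ι)) := fun h => by
    have := h.fintype_card_le_finrank
    simp only [Module.finrank_fintype_fun_eq_card, coe_sort_coe, Fintype.card_coe,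
      Fintype.card_subtype_compl, Fintype.card_fun] at this
    have hS_le := S.card_le_univ
    rw [Fintype.card_fun] at hS_le
    omega
  simp only [linearIndepOn_finset_iff, not_forall] at hdep
  obtain ⟨c, hc, T, hT, hcT⟩ := hdep
  refine ⟨c, fun h0 => hcT ?_, fun v hv => ?_⟩
  · have hind : LinearIndepOn K (squarefreeMonomial K) (setsOfCardLE ι D : Set (Finset ι)) :=
      (linearIndependent_squarefreeMonomial K).linearIndepOn _
    exact linearIndepOn_finset_iff.mp hind c h0 T hT
  · have := congrFun hc ⟨v, hv⟩
    simp only [Finset.sum_apply, Pi.smul_apply, Pi.zero_apply] at this ⊢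
    exact this

lemma translate_sum_smul_squarefreeMonomial [CommRing K] [DecidableEq ι]
    (𝒯 : Finset (Finset ι)) (c : Finset ι → K) (z : ι → K) :
    (fun y => (∑ T ∈ 𝒯, c T • squarefreeMonomial K T) (z + y)) =
      ∑ T ∈ 𝒯, ∑ U ∈ T.powerset,
        (squarefreeMonomial K U z * c T) • squarefreeMonomial K (T \ U) := by
  ext y
  simp only [Finset.sum_apply, Pi.smul_apply, smul_eq_mul, squarefreeMonomial_add, mul_sum]
  exact sum_congr rfl fun T _ => sum_congr rfl fun U _ => by ring

lemma card_le_half_of_half_lt_card_sdiff [DecidableEq ι] {D : ℕ} {T U : Finset ι}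
    (hT : #T ≤ D) (hU : U ⊆ T) (h : D / 2 < #(T \ U)) : #U ≤ D / 2 := by
  have := card_sdiff_add_card_eq_card hU
  omega

/-- In `(z + y)^T = ∑_{U ⊆ T} z^U y^(T \ U)` with `#T ≤ D`, either `#(T \ U) ≤ D/2` or
`#U ≤ D/2`. Terms of the first kind lie in the span of the monomials of degree `≤ D/2`; those
of the second kind, grouped by `U`, in the span of the functions `g U`. -/
theorem exists_finset_translate_mem_span [Fintype ι] [CommRing K] (c : Finset ι → K) (D : ℕ) :
    ∃ F : Finset ((ι → K) → K), #F ≤ 2 * #(setsOfCardLE ι (D / 2)) ∧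
      ∀ z : ι → K, (fun y => (∑ T ∈ setsOfCardLE ι D, c T • squarefreeMonomial K T)
        (z + y)) ∈ Submodule.span K (F : Set ((ι → K) → K)) := by
  classical
  set h := D / 2
  set 𝒯 := setsOfCardLE ι D
  let g : Finset ι → (ι → K) → K := fun U =>
    ∑ T ∈ 𝒯 with U ⊆ T ∧ h < #(T \ U), c T • squarefreeMonomial K (T \ U)
  refine ⟨(setsOfCardLE ι h).image (squarefreeMonomial K) ∪ (setsOfCardLE ι h).image g, ?_,
    fun z => ?_⟩
  · grw [card_union_le, card_image_le, card_image_le, two_mul]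
  rw [translate_sum_smul_squarefreeMonomial, coe_union, Submodule.span_union,
    sum_congr rfl fun T _ =>
    (sum_filter_add_sum_filter_not T.powerset (fun U => #(T \ U) ≤ h) _).symm,
    sum_add_distrib]
  refine Submodule.add_mem_sup (Submodule.sum_mem _ fun T _ => Submodule.sum_mem _ fun U hU => ?_)
    ?_
  · have hU' := mem_filter.mp hU
    refine Submodule.smul_mem _ _ (Submodule.subset_span (mem_coe.mpr (mem_image_of_mem _ ?_)))
    simpa [setsOfCardLE] using hU'.2
  · have hregroup : ∑ T ∈ 𝒯, ∑ U ∈ T.powerset with ¬ #(T \ U) ≤ h,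
        (squarefreeMonomial K U z * c T) • squarefreeMonomial K (T \ U) =
        ∑ U ∈ setsOfCardLE ι h, squarefreeMonomial K U z • g U := by
      simp only [g, smul_sum, smul_smul]
      apply sum_comm'
      intro T U
      simp only [𝒯, mem_filter, mem_powerset, not_le, setsOfCardLE, mem_univ, true_and]
      exact ⟨fun hTU => ⟨hTU, card_le_half_of_half_lt_card_sdiff hTU.1 hTU.2.1 hTU.2.2⟩,
        And.left⟩
    rw [hregroup]
    exact Submodule.sum_mem _ fun U hU => Submodule.smul_mem _ _
      (Submodule.subset_span (mem_coe.mpr (mem_image_of_mem _ hU)))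

theorem card_le_of_apply_add_eq_zero_iff_ne [Fintype ι] [Field K] {γ : Type*} (B : Finset γ)
    (a b : γ → ι → K) (c : Finset ι → K) (D : ℕ)
    (hdiag : ∀ i ∈ B, ∀ j ∈ B,
      (∑ T ∈ setsOfCardLE ι D, c T • squarefreeMonomial K T) (a i + b j) = 0 ↔ i ≠ j) :
    #B ≤ 2 * #(setsOfCardLE ι (D / 2)) := by
  set P := ∑ T ∈ setsOfCardLE ι D, c T • squarefreeMonomial K T
  obtain ⟨F, hF, hspan⟩ := exists_finset_translate_mem_span c D
  have hind : LinearIndependent K fun i : B => fun y => P (a i + y) := by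
    rw [Fintype.linearIndependent_iff]
    intro w hw j
    have hj := congrFun hw (b j)
    simp only [Finset.sum_apply, Pi.smul_apply, smul_eq_mul, Pi.zero_apply] at hj
    rw [sum_eq_single j (fun i _ hij => by
      rw [(hdiag i i.2 j j.2).mpr (Subtype.coe_ne_coe.mpr hij), mul_zero])
      (by simp)] at hj
    exact (mul_eq_zero.mp hj).resolve_right ((hdiag j j.2 j j.2).not.mpr (not_not.mpr rfl))
  have hcard := linearIndependent_le_span' _ hind F (Set.range_subset_iff.mpr fun i => hspan (a i))
  simp only [Cardinal.mk_coe_finset, coe_sort_coe, Fintype.card_coe, Nat.cast_le] at hcard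
  omega

end Monomials

section ZMod4

variable {ι : Type*}

def reduceMod2 (ι : Type*) : (ι → ZMod 4) →+ (ι → ZMod 2) :=
  (ZMod.castHom (show 2 ∣ 4 by norm_num) (ZMod 2)).toAddMonoidHom.compLeft ι

/-- The digit `⌊u / 2⌋` of `u ∈ {0, 1, 2, 3}`, so that `u = r + 2 d` with `r` the reduction
mod 2. -/
def secondDigit (a : ι → ZMod 4) : ι → ZMod 2 := fun i => ((a i).val / 2 : ℕ)

lemma reduceMod2_apply (a : ι → ZMod 4) (i : ι) : reduceMod2 ι a i = (a i).cast := rfl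

lemma reduceMod2_surjective : Function.Surjective (reduceMod2 ι) :=
  (ZMod.castHom_surjective (show 2 ∣ 4 by norm_num)).comp_left

lemma ker_reduceMod2 (n : ℕ) : (reduceMod2 (Fin n)).ker = Fsub n := by
  ext g
  have key : ∀ u : ZMod 4, (u.cast : ZMod 2) = 0 ↔ u + u = 0 := by decide
  simp only [AddMonoidHom.mem_ker, funext_iff, reduceMod2_apply, Pi.zero_apply, key]
  exact funext_iff.symm

lemma eq_of_reduceMod2_eq_of_secondDigit_eq {a b : ι → ZMod 4}
    (hr : reduceMod2 ι a = reduceMod2 ι b) (hd : secondDigit a = secondDigit b) : a = b := by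
  have key : ∀ u v : ZMod 4, (u.cast : ZMod 2) = v.cast →
      ((u.val / 2 : ℕ) : ZMod 2) = ((v.val / 2 : ℕ) : ZMod 2) → u = v := by decide
  exact funext fun i => key _ _ (congrFun hr i) (congrFun hd i)

/-- If `u = r + 2 d(u)` and `v = r + 2 d(v)`, then `u + v = 2 (r + d(u) + d(v))` in `ℤ/4`. -/
lemma add_eq_add_self_of_reduceMod2 {a b b' : ι → ZMod 4}
    (hr : reduceMod2 ι b = reduceMod2 ι b')
    (ha : reduceMod2 ι b + secondDigit b + secondDigit b' = reduceMod2 ι a) :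
    b + b' = a + a := by
  have key : ∀ u v w : ZMod 4, (u.cast : ZMod 2) = v.cast →
      (u.cast : ZMod 2) + ((u.val / 2 : ℕ) : ZMod 2) + ((v.val / 2 : ℕ) : ZMod 2) = w.cast →
      u + v = w + w := by decide
  exact funext fun i => key _ _ _ (congrFun hr i) (congrFun ha i)

lemma eq_of_reduceMod2_add_secondDigit_eq {b b' : ι → ZMod 4}
    (hr : reduceMod2 ι b = reduceMod2 ι b')
    (h : reduceMod2 ι b + secondDigit b + secondDigit b' = reduceMod2 ι b) : b = b' := by
  refine eq_of_reduceMod2_eq_of_secondDigit_eq hr (funext fun i => CharTwo.add_eq_zero.mp ?_)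
  simpa [add_assoc] using congrFun h i

theorem reduceMod2_ne_of_progressionFree {A : Finset (ι → ZMod 4)}
    (hA : ProgressionFree (A : Set (ι → ZMod 4))) {a b b' : ι → ZMod 4} (ha : a ∈ A)
    (hb : b ∈ A) (hb' : b' ∈ A) (hr : reduceMod2 ι b = reduceMod2 ι b') (hne : b ≠ b') :
    reduceMod2 ι a ≠ reduceMod2 ι b + secondDigit b + secondDigit b' := by
  intro hab
  have hba : a ≠ b := by
    rintro rfl
    exact hne (eq_of_reduceMod2_add_secondDigit_eq hr hab.symm)
  have hb'a : a ≠ b' := by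
    rintro rfl
    exact hne (eq_of_reduceMod2_add_secondDigit_eq hr (hab.symm.trans hr.symm))
  exact hA ⟨b, hb, b', hb', a, ha, hne, hba.symm, hb'a.symm,
    add_eq_add_self_of_reduceMod2 hr hab.symm⟩


theorem exists_card_fiber_le_of_progressionFree [Fintype ι] {A : Finset (ι → ZMod 4)}
    (hA : ProgressionFree (A : Set (ι → ZMod 4))) {S : Finset (ι → ZMod 2)}
    (hS : ∀ x ∈ S, ∃ a ∈ A, reduceMod2 ι a = x) {D : ℕ}
    (hD : #{T : Finset ι | D < #T} < #S) :
    ∃ x ∈ S, #{a ∈ A | reduceMod2 ι a = x} ≤ 2 * #(setsOfCardLE ι (D / 2)) := by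
  have hdim : Fintype.card (ZMod 2) ^ Fintype.card ι < #S + #(setsOfCardLE ι D) := by
    have := card_filter_add_card_filter_not (s := (univ : Finset (Finset ι)))
      (p := fun T => #T ≤ D)
    simp only [not_le, card_univ, Fintype.card_finset] at this
    rw [ZMod.card, setsOfCardLE]
    omega
  obtain ⟨c, hP, hPS⟩ := exists_ne_zero_eq_zero_off S D hdim
  obtain ⟨x, hx⟩ := Function.ne_iff.mp hP
  have hxS : x ∈ S := by_contra fun hxS => hx (hPS x hxS)
  refine ⟨x, hxS, card_le_of_apply_add_eq_zero_iff_ne _ (fun b => x + secondDigit b)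
    secondDigit c D fun b hb b' hb' => ?_⟩
  rw [mem_filter] at hb hb'
  refine ⟨fun hPb hbb' => ?_, fun hne => by_contra fun hPb => ?_⟩
  · subst hbb'
    refine hx ?_
    have hzero : secondDigit b + secondDigit b = 0 :=
      funext fun i => CharTwo.add_self_eq_zero (secondDigit b i)
    rwa [add_assoc, hzero, add_zero] at hPb
  · obtain ⟨a, ha, hax⟩ := hS _ (by_contra fun hS' => hPb (hPS _ hS'))
    refine reduceMod2_ne_of_progressionFree hA ha hb.1 hb'.1 (hb.2.trans hb'.2.symm) hne ?_
    rw [hax, hb.2, add_assoc]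

end ZMod4

theorem natCard_setOf_quotient_eq (n : ℕ) (A : Finset (Fin n → ZMod 4))
    [DecidableEq ((Fin n → ZMod 4) ⧸ Fsub n)] (p : ℕ → Prop) [DecidablePred p] :
    Nat.card {Q : (Fin n → ZMod 4) ⧸ Fsub n |
        p #{a ∈ A | (QuotientAddGroup.mk a : (Fin n → ZMod 4) ⧸ Fsub n) = Q}} =
      #{x | p #{a ∈ A | reduceMod2 (Fin n) a = x}} := by
  let e := (QuotientAddGroup.quotientAddEquivOfEq (ker_reduceMod2 n).symm).trans
    (QuotientAddGroup.quotientKerEquivOfSurjective _ reduceMod2_surjective)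
  have he : ∀ a : Fin n → ZMod 4, e a = reduceMod2 (Fin n) a := fun a => rfl
  rw [← Fintype.card_subtype, ← Nat.card_eq_fintype_card]
  refine Nat.card_congr (e.toEquiv.subtypeEquiv fun Q => ?_)
  have hfiber : A.filter (fun a => (QuotientAddGroup.mk a : (Fin n → ZMod 4) ⧸ Fsub n) = Q) =
      A.filter (fun a => reduceMod2 (Fin n) a = e Q) :=
    filter_congr fun a _ => by rw [← he, e.injective.eq_iff]
  simp only [Set.mem_ofPred_eq, hfiber]
  rfl

end RichCosets

open RichCosets Finset in
open scoped Classical in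
theorem rich_cosets_bound (n : ℕ) (hn : 1 ≤ n)
    (A : Finset (Fin n → ZMod 4)) (hA : ProgressionFree (A : Set (Fin n → ZMod 4)))
    (ε : ℝ) (hε : 0 < ε) (hε' : ε < 1 / 4) :
    (Nat.card {Q : (Fin n → ZMod 4) ⧸ Fsub n |
        (2 : ℝ) ^ ((n : ℝ) * binEnt (1 / 2 - ε) + 1) ≤
          ((A.filter fun a => (QuotientAddGroup.mk a : (Fin n → ZMod 4) ⧸ Fsub n) = Q).card : ℝ)} : ℝ)
      < (2 : ℝ) ^ ((n : ℝ) * binEnt (2 * ε)) := by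
  set M : ℝ := 2 ^ ((n : ℝ) * binEnt (1 / 2 - ε) + 1)
  have : Nonempty (Fin n) := ⟨⟨0, hn⟩⟩
  rw [natCard_setOf_quotient_eq n A fun k => M ≤ k]
  set S : Finset (Fin n → ZMod 2) := {x | M ≤ #{a ∈ A | reduceMod2 (Fin n) a = x}}
  by_contra! hS
  have hrich : ∀ x ∈ S, ∃ a ∈ A, reduceMod2 (Fin n) a = x := fun x hx => by
    obtain ⟨a, ha⟩ := card_pos.mp (Nat.cast_pos.mp
      ((by positivity : (0 : ℝ) < M).trans_le (mem_filter.mp hx).2))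
    exact ⟨a, mem_filter.mp ha⟩
  have hlarge := card_lt_card_lt_two_rpow_binEnt (ι := Fin n) (α := 2 * ε) (by positivity)
    (by linarith)
  have hsmall := two_mul_card_setsOfCardLE_half_lt (ι := Fin n) hε hε'
  rw [Fintype.card_fin] at hlarge hsmall
  obtain ⟨x, hxS, hx⟩ := exists_card_fiber_le_of_progressionFree hA hrich
    (by exact_mod_cast hlarge.trans_le hS)
  have hMx : M ≤ #{a ∈ A | reduceMod2 (Fin n) a = x} := (mem_filter.mp hxS).2
  have hxsmall : (#{a ∈ A | reduceMod2 (Fin n) a = x} : ℝ) ≤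
      2 * #(setsOfCardLE (Fin n) ((n - ⌊2 * ε * n⌋₊ - 1) / 2)) := by exact_mod_cast hx
  linarith
end

section
/- For every integer n ≥ 1 and every real z with 0 < z ≤ n/2, we have Σ_{0 ≤ i ≤ z} C(n,i) < 2^(n·H(z/n)), where the sum is over all integers i with 0 ≤ i ≤ z. -/
theorem binomial_sum_lt_entropy (n : ℕ) (hn : 1 ≤ n) (z : ℝ)
    (hz : 0 < z) (hz' : z ≤ n / 2) :
    ((∑ i ∈ Finset.range (⌊z⌋₊ + 1), n.choose i : ℕ) : ℝ) <
      (2 : ℝ) ^ ((n : ℝ) * binEnt (z / n)) := by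
  have hn0 : (0:ℝ) < n := by exact_mod_cast hn
  set p : ℝ := z / n with hpdef
  have hp : 0 < p := div_pos hz hn0
  have hp2 : p ≤ 1/2 := by
    rw [hpdef, div_le_div_iff₀ hn0 (by norm_num : (0:ℝ) < 2)]
    linarith
  have h1p : 0 < 1 - p := by linarith
  have hzn : (n:ℝ) * p = z := by
    rw [hpdef]; field_simp
  -- floor bound
  have hfloor : (⌊z⌋₊ : ℝ) ≤ z := Nat.floor_le hz.le
  have hfn : ⌊z⌋₊ < n := by
    by_contra h
    push_neg at h
    have : (n:ℝ) ≤ z := le_trans (by exact_mod_cast Nat.cast_le.mpr h) hfloor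
    linarith
  have hb : 0 < p ^ z * (1-p) ^ ((n:ℝ) - z) := by positivity
  -- rewrite RHS
  have hRHS : (2:ℝ) ^ ((n:ℝ) * binEnt p) = (p ^ z * (1-p) ^ ((n:ℝ) - z))⁻¹ := by
    have hEnt : (n:ℝ) * binEnt p
        = Real.logb 2 p * (-z) + Real.logb 2 (1-p) * (-((n:ℝ) - z)) := by
      unfold binEnt
      linear_combination (-(Real.logb 2 p) + Real.logb 2 (1-p)) * hzn
    rw [hEnt, Real.rpow_add (by norm_num : (0:ℝ) < 2),
      Real.rpow_mul (by norm_num : (0:ℝ) ≤ 2),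
      Real.rpow_mul (by norm_num : (0:ℝ) ≤ 2),
      Real.rpow_logb (by norm_num) (by norm_num) hp,
      Real.rpow_logb (by norm_num) (by norm_num) h1p,
      Real.rpow_neg hp.le, Real.rpow_neg h1p.le, mul_inv]
  rw [hRHS]
  rw [← one_div, lt_div_iff₀ hb]
  -- main inequality
  push_cast
  rw [Finset.sum_mul]
  have hstep1 : ∑ i ∈ Finset.range (⌊z⌋₊ + 1), (n.choose i : ℝ) * (p ^ z * (1-p) ^ ((n:ℝ) - z))
      ≤ ∑ i ∈ Finset.range (⌊z⌋₊ + 1), (n.choose i : ℝ) * (p ^ i * (1-p) ^ (n - i)) := by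
    apply Finset.sum_le_sum
    intro i hi
    have hile : i ≤ ⌊z⌋₊ := Nat.lt_succ_iff.mp (Finset.mem_range.mp hi)
    have hiz : (i:ℝ) ≤ z := le_trans (by exact_mod_cast Nat.cast_le.mpr hile) hfloor
    have hin : i ≤ n := le_of_lt (lt_of_le_of_lt hile hfn)
    have hcast : ((n - i : ℕ) : ℝ) = (n:ℝ) - i := by
      push_cast [Nat.cast_sub hin]; ring
    apply mul_le_mul_of_nonneg_left _ (by positivity)
    have h1 : p ^ z = p ^ (i:ℝ) * p ^ (z - i) := by
      rw [← Real.rpow_add hp]; ring_nf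
    have h2 : (1-p) ^ ((n:ℝ) - i) = (1-p) ^ (z - (i:ℝ)) * (1-p) ^ ((n:ℝ) - z) := by
      rw [← Real.rpow_add h1p]; ring_nf
    have h3 : p ^ (z - (i:ℝ)) ≤ (1-p) ^ (z - (i:ℝ)) :=
      Real.rpow_le_rpow hp.le (by linarith) (by linarith)
    calc p ^ z * (1-p) ^ ((n:ℝ) - z)
        = p ^ (i:ℝ) * (p ^ (z - (i:ℝ)) * (1-p) ^ ((n:ℝ) - z)) := by rw [h1]; ring
      _ ≤ p ^ (i:ℝ) * ((1-p) ^ (z - (i:ℝ)) * (1-p) ^ ((n:ℝ) - z)) := by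
          have : (0:ℝ) ≤ (1-p) ^ ((n:ℝ) - z) := by positivity
          have := mul_le_mul_of_nonneg_right h3 this
          exact mul_le_mul_of_nonneg_left this (by positivity)
      _ = p ^ (i:ℝ) * (1-p) ^ ((n:ℝ) - (i:ℝ)) := by rw [h2]
      _ = p ^ i * (1-p) ^ (n - i) := by
          rw [← hcast, Real.rpow_natCast, Real.rpow_natCast]
  have hstep2 : ∑ i ∈ Finset.range (⌊z⌋₊ + 1), (n.choose i : ℝ) * (p ^ i * (1-p) ^ (n - i))
      < ∑ i ∈ Finset.range (n + 1), (n.choose i : ℝ) * (p ^ i * (1-p) ^ (n - i)) := by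
    apply Finset.sum_lt_sum_of_subset
      (Finset.range_subset_range.mpr (by omega)) (i := n)
      (Finset.mem_range.mpr (by omega)) (by simp; omega)
    · simp [Nat.choose_self]
      positivity
    · intro j hj hjs
      positivity
  have hbin : ∑ i ∈ Finset.range (n + 1), (n.choose i : ℝ) * (p ^ i * (1-p) ^ (n - i)) = 1 := by
    have h := add_pow p (1-p) n
    simp only [add_sub_cancel, one_pow] at h
    calc ∑ i ∈ Finset.range (n + 1), (n.choose i : ℝ) * (p ^ i * (1-p) ^ (n - i))
        = ∑ m ∈ Finset.range (n + 1), p ^ m * (1-p) ^ (n - m) * (n.choose m : ℝ) := by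
          apply Finset.sum_congr rfl; intro i _; ring
      _ = 1 := h.symm
  calc ∑ i ∈ Finset.range (⌊z⌋₊ + 1), (n.choose i : ℝ) * (p ^ z * (1-p) ^ ((n:ℝ) - z))
      ≤ _ := hstep1
    _ < _ := hstep2
    _ = 1 := hbin
end

section
/- If n ≥ 1 and A ⊆ (ℤ/4ℤ)^n is progression-free, then |A| < (n + 2)·4^(γn), where γ = sup{ (1/2)(H(1/2 − ε) + H(2ε)) : 0 < ε < 1/4 } ≈ 0.926. -/
/-- `γ = sup { (1/2)(H(1/2-ε) + H(2ε)) : 0 < ε < 1/4 } ≈ 0.926`. -/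
noncomputable def gam : ℝ :=
  sSup ((fun ε : ℝ => (1 / 2) * (binEnt (1 / 2 - ε) + binEnt (2 * ε))) ''
    Set.Ioo 0 (1 / 4))

/-!
Write `a ∈ (ℤ/4)ⁿ` as `a = x + 2u` with binary digit vectors `x, u ∈ 𝔽₂ⁿ`; let `S` be the set of
`x` that occur and `B_x` the set of `u` occurring with `x`. For distinct `u, v ∈ B_x` we have
`x + u + v ∉ S`, since otherwise `(x + 2u) + (x + 2v) = 2c` for some `c ∈ A`.

For `x ∈ S` let `d_x` be the least degree of a polynomial `h` on `𝔽₂ⁿ` vanishing off `S` with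
`h x = 1`. Then `p w = h (x + w)` has `p 0 = 1` and `p (u + v) = 0` for distinct `u, v ∈ B_x`, so
the matrix `(p (u + v))` restricted to `B_x` is the identity. Splitting every monomial of
`p (u + v)` into a part of low degree in `u` or in `v` bounds its rank, which gives the
Croot–Lev–Pach bound `|B_x| ≤ m_t + m_s` whenever `d_x ≤ t + s + 1`, where
`m_k = ∑_{j ≤ k} C(n, j)`.
Dually, at most `2ⁿ - m_e` points `x ∈ S` have `d_x > e`, because a polynomial of degree `≤ e`
vanishing off these points is zero. Summing over `x`,
`|A| ≤ 2 · 2ⁿ + ∑_{e < n} C(n, ⌈e/2⌉) (2ⁿ - m_e)`, and the entropy bound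
`∑_{j ≤ qn} C(n, j) ≤ 2^{n H(q)}` makes each summand at most `4^{γn}`.
-/

open Finset Module

namespace Matrix

variable {K m n : Type*} [Field K]

theorem rank_add_le [Fintype n] (A B : Matrix m n K) : (A + B).rank ≤ A.rank + B.rank := by
  rw [rank, rank, rank, mulVecLin_add]
  exact (Submodule.finrank_mono (LinearMap.range_add_le _ _)).trans
    (Submodule.finrank_add_le_finrank_add_finrank _ _)

def rowsIn (W : Submodule K (n → K)) : Submodule K (Matrix m n K) where
  carrier := {A | ∀ i, A i ∈ W}
  add_mem' hA hB i := W.add_mem (hA i) (hB i)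
  zero_mem' _ := W.zero_mem
  smul_mem' c _ hA i := W.smul_mem c (hA i)

def colsIn (V : Submodule K (m → K)) : Submodule K (Matrix m n K) where
  carrier := {A | ∀ j, Aᵀ j ∈ V}
  add_mem' hA hB j := V.add_mem (hA j) (hB j)
  zero_mem' _ := V.zero_mem
  smul_mem' c _ hA j := V.smul_mem c (hA j)

theorem rank_le_of_mem_rowsIn [Fintype m] [Fintype n] {W : Submodule K (n → K)}
    {A : Matrix m n K} (hA : A ∈ rowsIn W) : A.rank ≤ finrank K W := by
  rw [rank_eq_finrank_span_row]
  exact Submodule.finrank_mono (Submodule.span_le.2 (Set.range_subset_iff.2 hA))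

theorem rank_le_of_mem_colsIn [Fintype m] [Fintype n] {V : Submodule K (m → K)}
    {A : Matrix m n K} (hA : A ∈ colsIn V) : A.rank ≤ finrank K V := by
  rw [← rank_transpose]
  exact rank_le_of_mem_rowsIn (W := V) hA

theorem rank_le_of_mem_colsIn_sup_rowsIn [Fintype m] [Fintype n] {V : Submodule K (m → K)}
    {W : Submodule K (n → K)} {A : Matrix m n K} (hA : A ∈ colsIn V ⊔ rowsIn W) :
    A.rank ≤ finrank K V + finrank K W := by
  obtain ⟨B, hB, C, hC, rfl⟩ := Submodule.mem_sup.1 hA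
  exact (rank_add_le B C).trans (add_le_add (rank_le_of_mem_colsIn hB) (rank_le_of_mem_rowsIn hC))

end Matrix

theorem Submodule.finrank_add_card_le {K X : Type*} [Field K] [Fintype X]
    {V : Submodule K (X → K)} {Z : Finset X} (hV : ∀ f ∈ V, (∀ y ∉ Z, f y = 0) → f = 0) :
    finrank K V + #Z ≤ Fintype.card X := by
  classical
  let restrict : V →ₗ[K] ({y // y ∉ Z} → K) := LinearMap.funLeft K K Subtype.val ∘ₗ V.subtype
  have hinj : Function.Injective restrict := by
    rw [← LinearMap.ker_eq_bot, LinearMap.ker_eq_bot']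
    exact fun f hf => Subtype.ext (hV f f.2 fun y hy => congrFun hf ⟨y, hy⟩)
  have := LinearMap.finrank_le_finrank_of_injective hinj
  rw [Module.finrank_fintype_fun_eq_card, Fintype.card_subtype_compl, Fintype.card_coe] at this
  have := Z.card_le_univ
  omega

namespace BooleanCube

variable {ι : Type*}

def monomial (T : Finset ι) : (ι → ZMod 2) → ZMod 2 := fun w => ∏ i ∈ T, w i

def degreeLE (d : ℕ) : Submodule (ZMod 2) ((ι → ZMod 2) → ZMod 2) :=
  Submodule.span (ZMod 2) (Set.range fun T : {T : Finset ι // #T ≤ d} => monomial T.1)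

def sumChoose (n d : ℕ) : ℕ := ∑ j ∈ range (d + 1), n.choose j

lemma monomial_mem_degreeLE {T : Finset ι} {d : ℕ} (hT : #T ≤ d) : monomial T ∈ degreeLE d :=
  Submodule.subset_span ⟨⟨T, hT⟩, rfl⟩

lemma monomial_add [DecidableEq ι] (T : Finset ι) (u v : ι → ZMod 2) :
    monomial T (u + v) = ∑ T₁ ∈ T.powerset, monomial T₁ u * monomial (T \ T₁) v :=
  prod_add _ _ _

lemma comp_add_mem_degreeLE [DecidableEq ι] {d : ℕ} {h : (ι → ZMod 2) → ZMod 2}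
    (hh : h ∈ degreeLE d) (x : ι → ZMod 2) : (fun w => h (x + w)) ∈ degreeLE d := by
  let τ := LinearMap.funLeft (ZMod 2) (ZMod 2) (x + · : (ι → ZMod 2) → ι → ZMod 2)
  suffices degreeLE d ≤ (degreeLE d).comap τ from this hh
  rw [degreeLE, Submodule.span_le]
  rintro _ ⟨⟨T, hT⟩, rfl⟩
  have : τ (monomial T) = ∑ T₁ ∈ T.powerset, monomial T₁ x • monomial (T \ T₁) := by
    ext w
    simp [τ, monomial_add]
  rw [SetLike.mem_coe, Submodule.mem_comap, this]
  exact Submodule.sum_mem _ fun T₁ _ => Submodule.smul_mem _ _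
    (monomial_mem_degreeLE ((card_le_card sdiff_subset).trans hT))

lemma single_eq_prod [Fintype ι] (y : ι → ZMod 2) :
    Pi.single y 1 = fun w : ι → ZMod 2 => ∏ i, (w i + (1 + y i)) := by
  have digit (a b : ZMod 2) : a + (1 + b) = if a = b then 1 else 0 := by decide +revert
  funext w
  rcases eq_or_ne w y with rfl | hne
  · simp [digit]
  · obtain ⟨i, hi⟩ := Function.ne_iff.1 hne
    rw [Pi.single_eq_of_ne hne, eq_comm]
    exact prod_eq_zero (mem_univ i) (by simp [digit, hi])

lemma single_mem_degreeLE [Fintype ι] [DecidableEq ι] (y : ι → ZMod 2) :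
    Pi.single y 1 ∈ degreeLE (Fintype.card ι) := by
  have hsum : (Pi.single y 1 : (ι → ZMod 2) → ZMod 2) =
      ∑ T ∈ (univ : Finset ι).powerset, (∏ i ∈ univ \ T, (1 + y i)) • monomial T := by
    ext w
    simp [single_eq_prod, prod_add, monomial, mul_comm]
  rw [hsum]
  exact Submodule.sum_mem _ fun T _ =>
    Submodule.smul_mem _ _ (monomial_mem_degreeLE (card_le_univ T))

lemma degreeLE_card_eq_top [Fintype ι] [DecidableEq ι] :
    degreeLE (ι := ι) (Fintype.card ι) = ⊤ := by
  refine eq_top_iff.2 ((Pi.basisFun (ZMod 2) (ι → ZMod 2)).span_eq.symm.trans_le ?_)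
  rw [Submodule.span_le]
  rintro _ ⟨y, rfl⟩
  simpa using single_mem_degreeLE y

lemma linearIndependent_monomial [Fintype ι] [DecidableEq ι] :
    LinearIndependent (ZMod 2) (monomial (ι := ι)) := by
  refine linearIndependent_of_top_le_span_of_card_eq_finrank ?_ ?_
  · rw [← degreeLE_card_eq_top]
    exact Submodule.span_mono (Set.range_subset_iff.2 fun T => ⟨T.1, rfl⟩)
  · simp [Module.finrank_fintype_fun_eq_card, Fintype.card_finset]

lemma card_filter_card_le [Fintype ι] (d : ℕ) :
    #{T : Finset ι | #T ≤ d} = sumChoose (Fintype.card ι) d := by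
  rw [card_eq_sum_card_fiberwise (f := card) (t := range (d + 1))
    (fun T hT => mem_range.2 (Nat.lt_succ_of_le (mem_filter.1 hT).2)), sumChoose]
  refine sum_congr rfl fun j hj => ?_
  have : {T ∈ ({T | #T ≤ d} : Finset (Finset ι)) | #T = j} = powersetCard j univ := by
    ext T
    simp only [mem_filter, mem_univ, true_and, mem_powersetCard, subset_univ]
    have := mem_range.1 hj
    omega
  rw [this, card_powersetCard, card_univ]

lemma finrank_degreeLE [Fintype ι] [DecidableEq ι] (d : ℕ) :
    finrank (ZMod 2) (degreeLE (ι := ι) d) = sumChoose (Fintype.card ι) d := by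
  have hli : LinearIndependent (ZMod 2) fun T : {T : Finset ι // #T ≤ d} => monomial T.1 :=
    linearIndependent_monomial.comp _ Subtype.val_injective
  rw [degreeLE, finrank_span_eq_card hli, Fintype.card_subtype, card_filter_card_le]

def addMatrix :
    ((ι → ZMod 2) → ZMod 2) →ₗ[ZMod 2] Matrix (ι → ZMod 2) (ι → ZMod 2) (ZMod 2) where
  toFun p := Matrix.of fun u v => p (u + v)
  map_add' _ _ := rfl
  map_smul' _ _ := rfl

@[simp]
lemma addMatrix_apply (p : (ι → ZMod 2) → ZMod 2) (u v : ι → ZMod 2) :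
    addMatrix p u v = p (u + v) :=
  rfl

open Matrix

lemma of_monomial_mul_mem {t s : ℕ} {T₁ T₂ : Finset ι} (h : #T₁ ≤ t ∨ #T₂ ≤ s) :
    of (fun u v => monomial T₁ u * monomial T₂ v) ∈ colsIn (degreeLE t) ⊔ rowsIn (degreeLE s) := by
  rcases h with h | h
  · refine Submodule.mem_sup_left fun v => ?_
    have : (of fun u v => monomial T₁ u * monomial T₂ v)ᵀ v = monomial T₂ v • monomial T₁ := by
      ext
      simp [mul_comm]
    rw [this]
    exact Submodule.smul_mem _ _ (monomial_mem_degreeLE h)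
  · exact Submodule.mem_sup_right fun u =>
      Submodule.smul_mem _ (monomial T₁ u) (monomial_mem_degreeLE h)

lemma addMatrix_mem_colsIn_sup_rowsIn [DecidableEq ι] {t s d : ℕ} (hd : d ≤ t + s + 1)
    {p : (ι → ZMod 2) → ZMod 2} (hp : p ∈ degreeLE d) :
    addMatrix p ∈ colsIn (degreeLE t) ⊔ rowsIn (degreeLE s) := by
  suffices degreeLE d ≤ (colsIn (degreeLE t) ⊔ rowsIn (degreeLE s)).comap addMatrix from this hp
  rw [degreeLE, Submodule.span_le]
  rintro _ ⟨⟨T, hT⟩, rfl⟩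
  have : addMatrix (monomial T) =
      ∑ T₁ ∈ T.powerset, of fun u v => monomial T₁ u * monomial (T \ T₁) v := by
    ext u v
    simp [monomial_add, Matrix.sum_apply]
  rw [SetLike.mem_coe, Submodule.mem_comap, this]
  refine Submodule.sum_mem _ fun T₁ hT₁ => of_monomial_mul_mem ?_
  rw [card_sdiff_of_subset (mem_powerset.1 hT₁)]
  omega

theorem card_le_sumChoose_add_sumChoose [Fintype ι] [DecidableEq ι] {t s d : ℕ}
    (hd : d ≤ t + s + 1) {p : (ι → ZMod 2) → ZMod 2} (hp : p ∈ degreeLE d) (h0 : p 0 = 1)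
    {B : Finset (ι → ZMod 2)} (hB : ∀ u ∈ B, ∀ v ∈ B, u ≠ v → p (u + v) = 0) :
    #B ≤ sumChoose (Fintype.card ι) t + sumChoose (Fintype.card ι) s := by
  have hdiag : (addMatrix p).submatrix (Subtype.val : B → ι → ZMod 2)
      (Subtype.val : B → ι → ZMod 2) = 1 := by
    ext u v
    rcases eq_or_ne u v with rfl | huv
    · simp [ZModModule.add_self, h0]
    · simp [huv, hB u u.2 v v.2 (Subtype.coe_injective.ne huv)]
  calc #B = (1 : Matrix B B (ZMod 2)).rank := by simp
    _ ≤ (addMatrix p).rank := hdiag ▸ rank_submatrix_le _ _ _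
    _ ≤ _ := by
      simpa only [finrank_degreeLE] using
        rank_le_of_mem_colsIn_sup_rowsIn (addMatrix_mem_colsIn_sup_rowsIn hd hp)

/-- Since `sInf ∅ = 0`, this is meaningful only for `x ∈ S`. -/
noncomputable def isolatingDegree (S : Finset (ι → ZMod 2)) (x : ι → ZMod 2) : ℕ :=
  sInf {d | ∃ h ∈ degreeLE d, (∀ y ∉ S, h y = 0) ∧ h x = 1}

variable {S : Finset (ι → ZMod 2)} {x : ι → ZMod 2}

lemma apply_eq_zero_of_lt_isolatingDegree {e : ℕ} (he : e < isolatingDegree S x)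
    {h : (ι → ZMod 2) → ZMod 2} (hh : h ∈ degreeLE e) (hS : ∀ y ∉ S, h y = 0) : h x = 0 := by
  have : ∀ a : ZMod 2, a ≠ 0 → a = 1 := by decide
  by_contra hx
  exact Nat.notMem_of_lt_sInf he ⟨h, hh, hS, this _ hx⟩

lemma card_mem_setOf_isolating [Fintype ι] [DecidableEq ι] (hx : x ∈ S) :
    Fintype.card ι ∈ {d | ∃ h ∈ degreeLE d, (∀ y ∉ S, h y = 0) ∧ h x = 1} :=
  ⟨Pi.single x 1, single_mem_degreeLE x,
    fun _ hy => Pi.single_eq_of_ne (ne_of_mem_of_not_mem hx hy).symm _, Pi.single_eq_same _ _⟩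

lemma isolatingDegree_le_card [Fintype ι] [DecidableEq ι] (hx : x ∈ S) :
    isolatingDegree S x ≤ Fintype.card ι :=
  Nat.sInf_le (card_mem_setOf_isolating hx)

lemma exists_mem_degreeLE_isolatingDegree [Fintype ι] [DecidableEq ι] (hx : x ∈ S) :
    ∃ h ∈ degreeLE (isolatingDegree S x), (∀ y ∉ S, h y = 0) ∧ h x = 1 :=
  Nat.sInf_mem ⟨_, card_mem_setOf_isolating hx⟩

theorem card_filter_lt_isolatingDegree_le [Fintype ι] [DecidableEq ι]
    (S : Finset (ι → ZMod 2)) (e : ℕ) :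
    #{x ∈ S | e < isolatingDegree S x} ≤ 2 ^ Fintype.card ι - sumChoose (Fintype.card ι) e := by
  have := Submodule.finrank_add_card_le (V := degreeLE e) (Z := {x ∈ S | e < isolatingDegree S x})
    fun h hh hZ => funext fun x => by
      by_cases hx : x ∈ {x ∈ S | e < isolatingDegree S x}
      · exact apply_eq_zero_of_lt_isolatingDegree (mem_filter.1 hx).2 hh
          fun y hy => hZ y fun hyZ => hy (mem_filter.1 hyZ).1
      · exact hZ x hx
  simp only [finrank_degreeLE, Fintype.card_fun, ZMod.card] at this
  omega

theorem card_le_sumChoose_isolatingDegree [Fintype ι] [DecidableEq ι] (hx : x ∈ S)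
    {B : Finset (ι → ZMod 2)} (hB : ∀ u ∈ B, ∀ v ∈ B, u ≠ v → x + u + v ∉ S) :
    #B ≤ sumChoose (Fintype.card ι) (isolatingDegree S x / 2) +
      sumChoose (Fintype.card ι) ((isolatingDegree S x - 1) / 2) := by
  obtain ⟨h, hh, hS, hx⟩ := exists_mem_degreeLE_isolatingDegree hx
  refine card_le_sumChoose_add_sumChoose (by omega) (comp_add_mem_degreeLE hh x)
    (by simpa using hx) fun u hu v hv huv => ?_
  rw [← add_assoc]
  exact hS _ (hB u hu v hv huv)

theorem sumChoose_half_add_le (n d : ℕ) :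
    sumChoose n (d / 2) + sumChoose n ((d - 1) / 2) ≤
      2 + ∑ e ∈ range d, n.choose ((e + 1) / 2) := by
  induction d with
  | zero => simp [sumChoose]
  | succ d ih =>
    have hstep :
        sumChoose n ((d + 1) / 2) ≤ sumChoose n ((d - 1) / 2) + n.choose ((d + 1) / 2) := by
      rcases (by omega : (d + 1) / 2 = (d - 1) / 2 ∨ (d + 1) / 2 = (d - 1) / 2 + 1) with h | h
      · rw [h]
        exact Nat.le_add_right _ _
      · rw [h, sumChoose, sum_range_succ]
        rfl
    rw [sum_range_succ, Nat.add_sub_cancel]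
    omega

theorem sum_card_le_of_forall_add_add_notMem [Fintype ι] [DecidableEq ι]
    (S : Finset (ι → ZMod 2)) (B : (ι → ZMod 2) → Finset (ι → ZMod 2))
    (hB : ∀ x ∈ S, ∀ u ∈ B x, ∀ v ∈ B x, u ≠ v → x + u + v ∉ S) :
    ∑ x ∈ S, #(B x) ≤ 2 * 2 ^ Fintype.card ι + ∑ e ∈ range (Fintype.card ι),
      (Fintype.card ι).choose ((e + 1) / 2) *
        (2 ^ Fintype.card ι - sumChoose (Fintype.card ι) e) := by
  set n := Fintype.card ι
  set f : ℕ → ℕ := fun e => n.choose ((e + 1) / 2)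
  have hfiber : ∀ x ∈ S, #(B x) ≤ 2 + ∑ e ∈ range n with e < isolatingDegree S x, f e := by
    intro x hx
    have hrange : {e ∈ range n | e < isolatingDegree S x} = range (isolatingDegree S x) := by
      ext e
      have := isolatingDegree_le_card hx
      simp only [mem_filter, mem_range]
      omega
    rw [hrange]
    exact (card_le_sumChoose_isolatingDegree hx (hB x hx)).trans (sumChoose_half_add_le _ _)
  have hS : #S ≤ 2 ^ n := by simpa [n] using S.card_le_univ
  calc ∑ x ∈ S, #(B x) ≤ ∑ x ∈ S, (2 + ∑ e ∈ range n with e < isolatingDegree S x, f e) :=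
        sum_le_sum hfiber
    _ = 2 * #S + ∑ e ∈ range n, f e * #{x ∈ S | e < isolatingDegree S x} := by
        rw [sum_add_distrib, sum_const, smul_eq_mul, mul_comm,
          sum_comm' (t' := range n) (s' := fun e => {x ∈ S | e < isolatingDegree S x})
            (fun x e => by simp only [mem_filter]; tauto)]
        simp [sum_const, mul_comm]
    _ ≤ 2 * 2 ^ n + ∑ e ∈ range n, f e * (2 ^ n - sumChoose n e) := by
        gcongr with e
        exact card_filter_lt_isolatingDegree_le S e

theorem sumChoose_add_sumChoose_sub {n e : ℕ} (he : e < n) :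
    sumChoose n e + sumChoose n (n - e - 1) = 2 ^ n := by
  have hsymm : sumChoose n (n - e - 1) = ∑ j ∈ range (n - e), n.choose (e + 1 + j) := by
    rw [sumChoose, Nat.sub_add_cancel (by omega), ← sum_range_reflect]
    refine sum_congr rfl fun j hj => ?_
    have := mem_range.1 hj
    rw [← Nat.choose_symm (by omega)]
    congr 1
    omega
  rw [hsymm, sumChoose, ← sum_range_add, show e + 1 + (n - e) = n + 1 by omega,
    Nat.sum_range_choose]

end BooleanCube

theorem ProgressionFree.eq_of_add_eq_add_self {G : Type*} [AddCommGroup G] {A : Set G}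
    (hA : ProgressionFree A) {a b c : G} (ha : a ∈ A) (hb : b ∈ A) (hc : c ∈ A)
    (h : a + b = c + c) : a = b := by
  by_contra hab
  refine hA ⟨a, ha, b, hb, c, hc, hab, ?_, ?_, h⟩
  · rintro rfl
    exact hab (add_left_cancel h).symm
  · rintro rfl
    exact hab (add_right_cancel h)

namespace ZMod4

variable {ι : Type*}

def ofDigits (x u : ι → ZMod 2) : ι → ZMod 4 := fun i => (x i).val + 2 * (u i).val

def lowDigit (a : ι → ZMod 4) : ι → ZMod 2 := fun i => (a i).val

def highDigit (a : ι → ZMod 4) : ι → ZMod 2 := fun i => ((a i).val / 2 : ℕ)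

lemma ofDigits_lowDigit_highDigit (a : ι → ZMod 4) :
    ofDigits (lowDigit a) (highDigit a) = a := by
  have digits (b : ZMod 4) :
      ((b.val : ZMod 2).val : ZMod 4) + 2 * ((b.val / 2 : ℕ) : ZMod 2).val = b := by
    decide +revert
  exact funext fun i => digits (a i)

lemma ofDigits_add_ofDigits (x u v : ι → ZMod 2) :
    ofDigits x u + ofDigits x v = ofDigits 0 (x + u + v) := by
  have digits (y w z : ZMod 2) : ((y.val : ZMod 4) + 2 * w.val) + (y.val + 2 * z.val) =
      ((0 : ZMod 2).val : ZMod 4) + 2 * (y + w + z).val := by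
    decide +revert
  exact funext fun i => digits (x i) (u i) (v i)

lemma add_self_eq_ofDigits_lowDigit (a : ι → ZMod 4) : a + a = ofDigits 0 (lowDigit a) := by
  have digits (b : ZMod 4) : b + b = ((0 : ZMod 2).val : ZMod 4) + 2 * (b.val : ZMod 2).val := by
    decide +revert
  exact funext fun i => digits (a i)

lemma ofDigits_injective (x : ι → ZMod 2) : Function.Injective (ofDigits x) := by
  have digits (y w z : ZMod 2) : (y.val : ZMod 4) + 2 * w.val = y.val + 2 * z.val → w = z := by
    decide +revert
  exact fun u v h => funext fun i => digits (x i) (u i) (v i) (congrFun h i)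

open BooleanCube

theorem card_le_of_progressionFree [Fintype ι] [DecidableEq ι] {A : Finset (ι → ZMod 4)}
    (hA : ProgressionFree (A : Set (ι → ZMod 4))) :
    #A ≤ 2 * 2 ^ Fintype.card ι + ∑ e ∈ range (Fintype.card ι),
      (Fintype.card ι).choose ((e + 1) / 2) *
        (2 ^ Fintype.card ι - sumChoose (Fintype.card ι) e) := by
  set S := A.image lowDigit
  set B : (ι → ZMod 2) → Finset (ι → ZMod 2) := fun x => {u | ofDigits x u ∈ A}
  have hcover : A ⊆ S.biUnion fun x => (B x).image (ofDigits x) := by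
    intro a ha
    refine mem_biUnion.2 ⟨lowDigit a, mem_image_of_mem _ ha,
      mem_image.2 ⟨highDigit a, ?_, ofDigits_lowDigit_highDigit a⟩⟩
    simpa [B, ofDigits_lowDigit_highDigit] using ha
  have hB : ∀ x ∈ S, ∀ u ∈ B x, ∀ v ∈ B x, u ≠ v → x + u + v ∉ S := by
    intro x _ u hu v hv huv hxuv
    obtain ⟨c, hc, hcx⟩ := mem_image.1 hxuv
    refine huv (ofDigits_injective x (hA.eq_of_add_eq_add_self (mem_filter.1 hu).2
      (mem_filter.1 hv).2 hc ?_))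
    rw [ofDigits_add_ofDigits, add_self_eq_ofDigits_lowDigit, hcx]
  calc #A ≤ ∑ x ∈ S, #((B x).image (ofDigits x)) := (card_le_card hcover).trans card_biUnion_le
    _ ≤ ∑ x ∈ S, #(B x) := sum_le_sum fun _ _ => card_image_le
    _ ≤ _ := sum_card_le_of_forall_add_add_notMem S B hB

end ZMod4

open Real BooleanCube

lemma binEnt_mul_log_two (x : ℝ) : binEnt x * log 2 = binEntropy x := by
  have : log 2 ≠ 0 := by positivity
  simp only [binEnt, binEntropy, logb, log_inv]
  field_simp
  ring

lemma binEnt_le_one (x : ℝ) : binEnt x ≤ 1 := by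
  have := binEnt_mul_log_two x ▸ binEntropy_le_log_two (p := x)
  exact (mul_le_iff_le_one_left (log_pos one_lt_two)).1 this

theorem sum_range_choose_le_two_rpow {n m : ℕ} {q : ℝ} (hq0 : 0 < q) (hq : q ≤ 1 / 2)
    (hm : m ≤ q * n) : ∑ j ∈ range (m + 1), (n.choose j : ℝ) ≤ 2 ^ (n * binEnt q) := by
  have hqq : q ≤ 1 - q := by linarith
  have hq1 : 0 < 1 - q := by linarith
  have hmn : m ≤ n := by
    have : (m : ℝ) ≤ n := hm.trans (by nlinarith [(n.cast_nonneg : (0 : ℝ) ≤ n)])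
    exact_mod_cast this
  set Q := q ^ m * (1 - q) ^ (n - m)
  have hQ : 0 < Q := by positivity
  have hterm : ∀ j ≤ m, Q ≤ q ^ j * (1 - q) ^ (n - j) := fun j hj =>
    calc Q = q ^ j * q ^ (m - j) * (1 - q) ^ (n - m) := by rw [← pow_add, Nat.add_sub_cancel' hj]
      _ ≤ q ^ j * (1 - q) ^ (m - j) * (1 - q) ^ (n - m) := by gcongr
      _ = q ^ j * (1 - q) ^ (n - j) := by rw [mul_assoc, ← pow_add]; congr 2; omega
  have hsum : (∑ j ∈ range (m + 1), (n.choose j : ℝ)) * Q ≤ 1 :=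
    calc (∑ j ∈ range (m + 1), (n.choose j : ℝ)) * Q
        ≤ ∑ j ∈ range (m + 1), q ^ j * (1 - q) ^ (n - j) * n.choose j := by
          rw [sum_mul]
          refine sum_le_sum fun j hj => ?_
          rw [mul_comm (_ * _)]
          exact mul_le_mul_of_nonneg_left (hterm j (Nat.lt_succ_iff.1 (mem_range.1 hj)))
            (Nat.cast_nonneg _)
      _ ≤ ∑ j ∈ range (n + 1), q ^ j * (1 - q) ^ (n - j) * n.choose j :=
          sum_le_sum_of_subset_of_nonneg (range_subset_range.2 (by omega)) fun _ _ _ => by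
            positivity
      _ = 1 := by rw [← add_pow]; simp
  have hlog : -log Q ≤ n * binEnt q * log 2 := by
    rw [mul_assoc, binEnt_mul_log_two, log_mul (by positivity) (by positivity), log_pow, log_pow,
      Nat.cast_sub hmn, binEntropy, log_inv, log_inv]
    have hlog : log q ≤ log (1 - q) := log_le_log hq0 hqq
    nlinarith [mul_nonneg (sub_nonneg.2 hm) (sub_nonneg.2 hlog)]
  calc ∑ j ∈ range (m + 1), (n.choose j : ℝ) ≤ Q⁻¹ := by rw [← one_div, le_div_iff₀ hQ]; exact hsum
    _ = exp (-log Q) := by rw [exp_neg, exp_log hQ]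
    _ ≤ exp (n * binEnt q * log 2) := exp_le_exp.2 hlog
    _ = 2 ^ (n * binEnt q) := by rw [rpow_def_of_pos two_pos, mul_comm]

lemma choose_le_two_rpow {n k : ℕ} {q : ℝ} (hq0 : 0 < q) (hq : q ≤ 1 / 2) (hk : k ≤ q * n) :
    (n.choose k : ℝ) ≤ 2 ^ (n * binEnt q) :=
  (single_le_sum (fun j _ => Nat.cast_nonneg (n.choose j)) (self_mem_range_succ k)).trans
    (sum_range_choose_le_two_rpow hq0 hq hk)

lemma binEnt_one_third : binEnt (1 / 3) = logb 2 3 - 2 / 3 := by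
  rw [binEnt, show (1 : ℝ) - 1 / 3 = 2 / 3 by norm_num, logb_div one_ne_zero three_ne_zero,
    logb_div two_ne_zero three_ne_zero, logb_self_eq_one one_lt_two, logb_one]
  ring

lemma binEnt_one_quarter : binEnt (1 / 4) = 2 - 3 / 4 * logb 2 3 := by
  have h4 : logb 2 4 = 2 := by
    rw [show (4 : ℝ) = 2 ^ 2 by norm_num, logb_pow, logb_self_eq_one one_lt_two]; norm_num
  rw [binEnt, show (1 : ℝ) - 1 / 4 = 3 / 4 by norm_num, logb_div one_ne_zero four_ne_zero,
    logb_div three_ne_zero four_ne_zero, logb_one, h4]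
  ring

lemma le_logb_two_three : 52 / 33 ≤ logb 2 3 := by
  have h : logb 2 (2 ^ 52) ≤ logb 2 (3 ^ 33) :=
    logb_le_logb_of_le one_lt_two (by norm_num) (by norm_num)
  rw [logb_pow, logb_pow, logb_self_eq_one one_lt_two] at h
  norm_num at h
  linarith

lemma bddAbove_gam : BddAbove ((fun ε : ℝ => (1 / 2) * (binEnt (1 / 2 - ε) + binEnt (2 * ε))) ''
    Set.Ioo 0 (1 / 4)) :=
  ⟨1, by rintro _ ⟨ε, -, rfl⟩; linarith [binEnt_le_one (1 / 2 - ε), binEnt_le_one (2 * ε)]⟩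

lemma le_gam {ε : ℝ} (h0 : 0 < ε) (h1 : ε < 1 / 4) :
    (1 / 2) * (binEnt (1 / 2 - ε) + binEnt (2 * ε)) ≤ gam :=
  le_csSup bddAbove_gam ⟨ε, ⟨h0, h1⟩, rfl⟩

lemma binEnt_one_third_le_gam : binEnt (1 / 3) ≤ gam := by
  have := le_gam (ε := 1 / 6) (by norm_num) (by norm_num)
  norm_num at this ⊢
  linarith

lemma one_half_lt_gam : 1 / 2 < gam := by
  linarith [binEnt_one_third_le_gam, binEnt_one_third, le_logb_two_three]

lemma binEnt_one_quarter_add_one_le_two_mul_gam : binEnt (1 / 4) + 1 ≤ 2 * gam := by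
  linarith [binEnt_one_third_le_gam, binEnt_one_third, binEnt_one_quarter, le_logb_two_three]

lemma four_rpow_gam_mul_eq_two_rpow (n : ℕ) : (4 : ℝ) ^ (gam * n) = 2 ^ (n * (2 * gam)) := by
  rw [show (4 : ℝ) = 2 ^ (2 : ℝ) by norm_num, ← rpow_mul zero_le_two]
  ring_nf

lemma mul_le_four_rpow_gam {n : ℕ} {x y a b : ℝ} (hx : 0 ≤ x) (hxa : x ≤ 2 ^ (n * a))
    (hyb : y ≤ 2 ^ (n * b)) (hab : a + b ≤ 2 * gam) : x * y ≤ 4 ^ (gam * n) :=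
  calc x * y ≤ 2 ^ (n * a) * 2 ^ (n * b) :=
        (mul_le_mul_of_nonneg_left hyb hx).trans (mul_le_mul_of_nonneg_right hxa (by positivity))
    _ = 2 ^ (n * (a + b)) := by rw [← rpow_add two_pos, mul_add]
    _ ≤ 4 ^ (gam * n) := by
        rw [four_rpow_gam_mul_eq_two_rpow]
        exact rpow_le_rpow_of_exponent_le one_le_two (by gcongr)

theorem choose_mul_le_four_rpow_gam {n e : ℕ} (he : e < n) :
    (n.choose ((e + 1) / 2) : ℝ) * ((2 ^ n - sumChoose n e : ℕ) : ℝ) ≤ 4 ^ (gam * n) := by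
  have hk : (((e + 1) / 2 : ℕ) : ℝ) ≤ (e + 1) / 2 := by
    exact_mod_cast Nat.cast_div_le (α := ℝ) (m := e + 1) (n := 2)
  rcases (by omega : 2 * (e + 1) ≤ n ∨ (e + 1 < n ∧ n < 2 * (e + 1)) ∨ e + 1 = n)
    with hsmall | ⟨hlt, hgt⟩ | rfl
  · refine mul_le_four_rpow_gam (by positivity)
      (choose_le_two_rpow (q := 1 / 4) (by norm_num) (by norm_num) ?_) (b := 1) ?_
      binEnt_one_quarter_add_one_le_two_mul_gam
    · have : (2 * (e + 1) : ℝ) ≤ n := by exact_mod_cast hsmall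
      linarith
    · rw [mul_one, rpow_natCast]
      exact_mod_cast Nat.sub_le _ _
  · -- `ε` is chosen so that `(1/2 - ε) n = (e + 1) / 2` and `2 ε n = n - (e + 1)`.
    set ε : ℝ := (n - (e + 1)) / (2 * n)
    have hlt' : (e : ℝ) + 1 < n := by exact_mod_cast hlt
    have hpos : (0 : ℝ) < n := by linarith
    have hgt' : (n : ℝ) < 2 * (e + 1) := by exact_mod_cast hgt
    have hε0 : 0 < ε := div_pos (by linarith) (by linarith)
    have hε1 : ε < 1 / 4 := by rw [div_lt_iff₀ (by linarith)]; linarith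
    have hεn : 2 * ε * n = n - (e + 1) := by simp only [ε]; field_simp
    refine mul_le_four_rpow_gam (b := binEnt (2 * ε)) (by positivity)
      (choose_le_two_rpow (q := 1 / 2 - ε) (by linarith) (by linarith) (by nlinarith)) ?_
      (by linarith [le_gam hε0 hε1])
    rw [← sumChoose_add_sumChoose_sub he, Nat.add_sub_cancel_left, sumChoose, Nat.cast_sum]
    refine sum_range_choose_le_two_rpow (q := 2 * ε) (by linarith) (by linarith) ?_
    rw [hεn, show n - e - 1 = n - (e + 1) by omega, Nat.cast_sub hlt.le]
    push_cast
    rfl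
  · refine mul_le_four_rpow_gam (a := 1) (b := 0) (by positivity) ?_ ?_
      (by linarith [one_half_lt_gam])
    · rw [mul_one, rpow_natCast]
      exact_mod_cast Nat.choose_le_two_pow _ _
    · rw [← sumChoose_add_sumChoose_sub he, Nat.add_sub_cancel_left]
      simp [sumChoose]

theorem two_pow_lt_four_rpow_gam {n : ℕ} (hn : 1 ≤ n) : (2 : ℝ) ^ n < 4 ^ (gam * n) := by
  rw [four_rpow_gam_mul_eq_two_rpow, ← rpow_natCast]
  have : (1 : ℝ) ≤ n := by exact_mod_cast hn
  exact rpow_lt_rpow_of_exponent_lt one_lt_two (by nlinarith [one_half_lt_gam])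

theorem progressionFree_card_lt (n : ℕ) (hn : 1 ≤ n)
    (A : Finset (Fin n → ZMod 4)) (hA : ProgressionFree (A : Set (Fin n → ZMod 4))) :
    (A.card : ℝ) < ((n : ℝ) + 2) * (4 : ℝ) ^ (gam * n) := by
  have hcard := ZMod4.card_le_of_progressionFree hA
  rw [Fintype.card_fin] at hcard
  calc (A.card : ℝ) ≤ 2 * (2 : ℝ) ^ n + ∑ e ∈ range n,
        (n.choose ((e + 1) / 2) : ℝ) * ((2 ^ n - sumChoose n e : ℕ) : ℝ) := by
        exact_mod_cast hcard
    _ < 2 * 4 ^ (gam * n) + ∑ _e ∈ range n, (4 : ℝ) ^ (gam * n) := by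
        refine add_lt_add_of_lt_of_le (by gcongr; exact two_pow_lt_four_rpow_gam hn)
          (sum_le_sum fun e he => choose_mul_le_four_rpow_gam (mem_range.1 he))
    _ = ((n : ℝ) + 2) * (4 : ℝ) ^ (gam * n) := by
        rw [sum_const, card_range, nsmul_eq_mul]
        ring
end
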